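/- arXiv:1604.01515 — 2 statements merged into one kernel-verified Lean document; each statement's English description precedes it below -/
import Mathlib

section
/- Let k ≥ 2, a, n, M be positive integers with a ≤ n, and let x ∈ [1/k, 1 − 1/k]. On a probability space, let X_1,…,X_n and (U_{ij})_{1≤i≤n, 1≤j≤M} be independent random variables, each uniformly distributed on [0,1]. For each i set q_i := max(0, 1 − k|X_i − x|), B_{ij} := 1_{{U_{ij} ≤ (a/n)·q_i}}, and W̃_i := (k/(aM)) Σ_{j=1}^M B_{ij}. Then E[Σ_{i=1}^n W̃_i²] = (k/a) · [ (1 − 1/M)·(2a)/(3n) + 1/M ]. In particular this equals k/a when M = 1, and converges to 2k/(3n) as M → ∞. -/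
/-!
Expanding the square, `E[Σᵢ W̃ᵢ²] = (k/(aM))² Σᵢ Σⱼ Σⱼ' E[B_{ij} B_{ij'}]`. Given `Xᵢ`, the
indicators `B_{i1}, …, B_{iM}` are independent Bernoulli variables with parameter `(a/n) qᵢ`, so
`E[B_{ij} B_{ij'}]` is `E[(a/n) qᵢ] = a/(nk)` on the diagonal (`B² = B`) and
`E[((a/n) qᵢ)²] = 2a²/(3n²k)` off it. Both moments are integrals of powers of the tent function
`qᵢ`, whose support `[x - 1/k, x + 1/k]` lies in `[0, 1]`.
-/

open MeasureTheory ProbabilityTheory Filter Set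

lemma integral_Ioi_max_zero_one_sub_pow {m : ℕ} (hm : m ≠ 0) :
    ∫ t in Ioi (0 : ℝ), max 0 (1 - t) ^ m = 1 / (m + 1) := by
  have hvanish : ∀ t ∈ Ioi (0 : ℝ) \ Ioc 0 1, max 0 (1 - t) ^ m = 0 := fun t ht => by
    have : 1 < t := by grind
    rw [max_eq_left (by linarith), zero_pow hm]
  rw [setIntegral_eq_of_subset_of_forall_sdiff_eq_zero measurableSet_Ioi Ioc_subset_Ioi_self
    hvanish, ← intervalIntegral.integral_of_le zero_le_one]
  calc ∫ t in (0 : ℝ)..1, max 0 (1 - t) ^ m = ∫ t in (0 : ℝ)..1, (1 - t) ^ m :=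
        intervalIntegral.integral_congr fun t ht => by
          rw [uIcc_of_le zero_le_one] at ht
          rw [max_eq_right (by linarith [ht.2])]
    _ = 1 / (m + 1) := by simp [intervalIntegral.integral_comp_sub_left (fun t => t ^ m)]

lemma integral_max_zero_one_sub_abs_pow {m : ℕ} (hm : m ≠ 0) :
    ∫ t : ℝ, max 0 (1 - |t|) ^ m = 2 / (m + 1) := by
  rw [integral_comp_abs (f := fun t => max 0 (1 - t) ^ m), integral_Ioi_max_zero_one_sub_pow hm]
  ring

lemma integral_tent_pow {k : ℝ} (hk : 0 < k) (x : ℝ) {m : ℕ} (hm : m ≠ 0) :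
    ∫ s, max 0 (1 - k * |s - x|) ^ m = 2 / (k * (m + 1)) := by
  have hk' : ∀ s, k * |s| = |k * s| := fun s => by rw [abs_mul, abs_of_pos hk]
  simp only [hk']
  rw [integral_sub_right_eq_self (μ := volume) (fun s => max 0 (1 - |k * s|) ^ m) x,
    Measure.integral_comp_mul_left (fun s => max 0 (1 - |s|) ^ m),
    integral_max_zero_one_sub_abs_pow hm, abs_of_pos (inv_pos.2 hk), smul_eq_mul]
  field_simp

lemma setIntegral_Icc_tent_pow {k : ℝ} (hk : 0 < k) {x : ℝ} (hx : x ∈ Icc (1 / k) (1 - 1 / k))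
    {m : ℕ} (hm : m ≠ 0) :
    ∫ s in Icc (0 : ℝ) 1, max 0 (1 - k * |s - x|) ^ m = 2 / (k * (m + 1)) := by
  rw [setIntegral_eq_integral_of_forall_compl_eq_zero fun s hs => ?_, integral_tent_pow hk x hm]
  have hfar : 1 / k ≤ |s - x| := by
    simp only [mem_Icc, not_and_or, not_le] at hs
    rw [le_abs']
    rcases hs with hs | hs
    · left; linarith [hx.1]
    · right; linarith [hx.2]
  have : 1 ≤ k * |s - x| := by rwa [div_le_iff₀' hk] at hfar
  rw [max_eq_left (by linarith), zero_pow hm]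

lemma setIntegral_Icc_tent {k : ℝ} (hk : 0 < k) {x : ℝ} (hx : x ∈ Icc (1 / k) (1 - 1 / k)) :
    ∫ s in Icc (0 : ℝ) 1, max 0 (1 - k * |s - x|) = 1 / k := by
  have h := setIntegral_Icc_tent_pow hk hx one_ne_zero
  simp only [pow_one] at h
  rw [h]
  ring

lemma const_mul_tent_mem_Icc {c k : ℝ} (hc : c ∈ Icc (0 : ℝ) 1) (hk : 0 ≤ k) (x s : ℝ) :
    c * max 0 (1 - k * |s - x|) ∈ Icc (0 : ℝ) 1 := by
  have hq : max 0 (1 - k * |s - x|) ≤ 1 := max_le zero_le_one (by nlinarith [abs_nonneg (s - x)])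
  exact ⟨mul_nonneg hc.1 (le_max_left _ _), mul_le_one₀ hc.2 (le_max_left _ _) hq⟩

lemma integral_ite_le_uniform {p : ℝ} (hp : p ∈ Icc (0 : ℝ) 1) :
    ∫ u, (if u ≤ p then (1 : ℝ) else 0) ∂(volume.restrict (Icc (0 : ℝ) 1)) = p := by
  have hind : (fun u : ℝ => if u ≤ p then (1 : ℝ) else 0) = (Iic p).indicator 1 := by
    ext u; simp [indicator_apply]
  have hcap : Iic p ∩ Icc 0 1 = Icc 0 p := by
    ext u; simp only [mem_inter_iff, mem_Iic, mem_Icc]; grind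
  rw [hind, integral_indicator_one measurableSet_Iic, measureReal_restrict_apply measurableSet_Iic,
    hcap, Real.volume_real_Icc_of_le hp.1, sub_zero]

lemma measurable_ite_le {α : Type*} [MeasurableSpace α] {U Y : α → ℝ} (hU : Measurable U)
    (hY : Measurable Y) : Measurable fun ω => if U ω ≤ Y ω then (1 : ℝ) else 0 :=
  Measurable.ite (measurableSet_le hU hY) measurable_const measurable_const

section

variable {Ω : Type*} [MeasurableSpace Ω] {μ : Measure Ω}

lemma integral_sum_sq_const_mul_sum {ι κ : Type*} [Fintype ι] [Fintype κ] (K : ℝ)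
    (B : ι → κ → Ω → ℝ) (hB : ∀ i j j', Integrable (fun ω => B i j ω * B i j' ω) μ) :
    ∫ ω, ∑ i, (K * ∑ j, B i j ω) ^ 2 ∂μ = K ^ 2 * ∑ i, ∑ j, ∑ j', ∫ ω, B i j ω * B i j' ω ∂μ := by
  have hexpand : ∀ ω, ∑ i, (K * ∑ j, B i j ω) ^ 2 = ∑ i, ∑ j, ∑ j', K ^ 2 * (B i j ω * B i j' ω) :=
    fun ω => Finset.sum_congr rfl fun i _ => by
      rw [mul_pow, sq (∑ j, _), Finset.sum_mul_sum, Finset.mul_sum]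
      simp only [Finset.mul_sum]
  have hint : ∀ i j j', Integrable (fun ω => K ^ 2 * (B i j ω * B i j' ω)) μ :=
    fun i j j' => (hB i j j').const_mul _
  simp_rw [hexpand, Finset.mul_sum]
  rw [integral_finsetSum _ fun i _ => integrable_finsetSum _ fun j _ =>
    integrable_finsetSum _ fun j' _ => hint i j j']
  refine Finset.sum_congr rfl fun i _ => ?_
  rw [integral_finsetSum _ fun j _ => integrable_finsetSum _ fun j' _ => hint i j j']
  refine Finset.sum_congr rfl fun j _ => ?_
  rw [integral_finsetSum _ fun j' _ => hint i j j']
  exact Finset.sum_congr rfl fun j' _ => integral_const_mul _ _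

variable [IsFiniteMeasure μ]

lemma integral_comp_prodMk_of_indepFun {α β : Type*} [MeasurableSpace α] [MeasurableSpace β]
    {X : Ω → α} {Y : Ω → β} (hX : Measurable X) (hY : Measurable Y) (hXY : IndepFun X Y μ)
    {f : α × β → ℝ} (hf : Measurable f) (hfi : Integrable f ((μ.map X).prod (μ.map Y))) :
    ∫ ω, f (X ω, Y ω) ∂μ = ∫ s, ∫ t, f (s, t) ∂(μ.map Y) ∂(μ.map X) := by
  rw [← integral_prod f hfi, ← hXY.map_prod_eq_prod_map_map hX.aemeasurable hY.aemeasurable,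
    integral_map (hX.prodMk hY).aemeasurable hf.aestronglyMeasurable]

lemma integrable_ite_le {U Y : Ω → ℝ} (hU : Measurable U) (hY : Measurable Y) :
    Integrable (fun ω => if U ω ≤ Y ω then (1 : ℝ) else 0) μ :=
  .of_bound (measurable_ite_le hU hY).aestronglyMeasurable 1
    (.of_forall fun ω => by split_ifs <;> norm_num)

lemma integrable_ite_le_mul_ite_le {U V Y : Ω → ℝ} (hU : Measurable U) (hV : Measurable V)
    (hY : Measurable Y) :
    Integrable (fun ω => (if U ω ≤ Y ω then (1 : ℝ) else 0) * (if V ω ≤ Y ω then 1 else 0)) μ :=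
  (integrable_ite_le hV hY).bdd_mul (c := 1) (measurable_ite_le hU hY).aestronglyMeasurable
    (.of_forall fun ω => by split_ifs <;> norm_num)

variable {X U V : Ω → ℝ} {g : ℝ → ℝ}

lemma integral_ite_le_comp_of_indepFun (hX : Measurable X) (hU : Measurable U)
    (hXU : IndepFun X U μ) (hUunif : μ.map U = volume.restrict (Icc 0 1)) (hg : Measurable g)
    (hg01 : ∀ s, g s ∈ Icc 0 1) :
    ∫ ω, (if U ω ≤ g (X ω) then (1 : ℝ) else 0) ∂μ = ∫ s, g s ∂(μ.map X) := by
  rw [integral_comp_prodMk_of_indepFun (f := fun p : ℝ × ℝ => if p.2 ≤ g p.1 then 1 else 0) hX hU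
    hXU (measurable_ite_le measurable_snd (hg.comp measurable_fst))
    (integrable_ite_le measurable_snd (hg.comp measurable_fst)), hUunif]
  exact integral_congr_ae (.of_forall fun s => integral_ite_le_uniform (hg01 s))

lemma integral_ite_le_mul_ite_le_comp_of_indepFun (hX : Measurable X) (hU : Measurable U)
    (hV : Measurable V) (hXUV : IndepFun X (fun ω => (U ω, V ω)) μ) (hUV : IndepFun U V μ)
    (hUunif : μ.map U = volume.restrict (Icc 0 1)) (hVunif : μ.map V = volume.restrict (Icc 0 1))
    (hg : Measurable g) (hg01 : ∀ s, g s ∈ Icc 0 1) :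
    ∫ ω, (if U ω ≤ g (X ω) then (1 : ℝ) else 0) * (if V ω ≤ g (X ω) then 1 else 0) ∂μ
      = ∫ s, g s ^ 2 ∂(μ.map X) := by
  have hgX : Measurable fun p : ℝ × ℝ × ℝ => g p.1 := hg.comp measurable_fst
  rw [integral_comp_prodMk_of_indepFun (f := fun p : ℝ × ℝ × ℝ =>
      (if p.2.1 ≤ g p.1 then (1 : ℝ) else 0) * (if p.2.2 ≤ g p.1 then 1 else 0)) hX
      (hU.prodMk hV) hXUV
      ((measurable_ite_le measurable_snd.fst hgX).mul (measurable_ite_le measurable_snd.snd hgX))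
      (integrable_ite_le_mul_ite_le measurable_snd.fst measurable_snd.snd hgX),
    hUV.map_prod_eq_prod_map_map hU.aemeasurable hV.aemeasurable, hUunif, hVunif]
  refine integral_congr_ae (.of_forall fun s => ?_)
  dsimp only
  rw [integral_prod_mul (fun u => if u ≤ g s then (1 : ℝ) else 0)
      (fun v => if v ≤ g s then (1 : ℝ) else 0), integral_ite_le_uniform (hg01 s), sq]

lemma integral_ite_le_mul_ite_le_of_iIndepFun {ι κ : Type*} [DecidableEq κ] {X : ι → Ω → ℝ}
    {U : ι → κ → Ω → ℝ} (hXm : ∀ i, Measurable (X i)) (hUm : ∀ i j, Measurable (U i j))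
    (hindep : iIndepFun (Sum.elim X (fun p : ι × κ => U p.1 p.2)) μ)
    (hXunif : ∀ i, μ.map (X i) = volume.restrict (Icc 0 1))
    (hUunif : ∀ i j, μ.map (U i j) = volume.restrict (Icc 0 1))
    (hg : Measurable g) (hg01 : ∀ s, g s ∈ Icc 0 1) (i : ι) (j j' : κ) :
    ∫ ω, (if U i j ω ≤ g (X i ω) then (1 : ℝ) else 0) * (if U i j' ω ≤ g (X i ω) then 1 else 0) ∂μ
      = if j = j' then ∫ s in Icc 0 1, g s else ∫ s in Icc 0 1, g s ^ 2 := by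
  split_ifs with hjj
  · subst hjj
    calc _ = ∫ ω, (if U i j ω ≤ g (X i ω) then (1 : ℝ) else 0) ∂μ :=
          integral_congr_ae (.of_forall fun ω => by dsimp only; split_ifs <;> norm_num)
      _ = _ := by
        rw [integral_ite_le_comp_of_indepFun (hXm i) (hUm i j)
          (hindep.indepFun (i := .inl i) (j := .inr (i, j)) (by simp)) (hUunif i j) hg hg01,
          hXunif i]
  · have hmeas : ∀ l, Measurable (Sum.elim X (fun p : ι × κ => U p.1 p.2) l) :=
      fun | .inl i => hXm i | .inr p => hUm p.1 p.2
    rw [integral_ite_le_mul_ite_le_comp_of_indepFun (hXm i) (hUm i j) (hUm i j')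
      (hindep.indepFun_prodMk hmeas (.inr (i, j)) (.inr (i, j')) (.inl i) (by simp) (by simp)).symm
      (hindep.indepFun (i := .inr (i, j)) (j := .inr (i, j')) (by simpa)) (hUunif i j)
      (hUunif i j') hg hg01, hXunif i]

end

lemma sum_sum_ite_eq {κ : Type*} [Fintype κ] [DecidableEq κ] (A C : ℝ) :
    ∑ j : κ, ∑ j' : κ, (if j = j' then A else C)
      = Fintype.card κ * (A + (Fintype.card κ - 1) * C) := by
  have hrow : ∀ j : κ, ∑ j', (if j = j' then A else C) = A + (Fintype.card κ - 1) * C :=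
    fun j => by
      rw [← Finset.sum_erase_add _ _ (Finset.mem_univ j), if_pos rfl,
        Finset.sum_congr rfl fun j' hj' => if_neg (Finset.ne_of_mem_erase hj').symm,
        Finset.sum_const, Finset.card_erase_of_mem (Finset.mem_univ j), nsmul_eq_mul,
        Finset.card_univ, Nat.cast_pred (Fintype.card_pos_iff.2 ⟨j⟩)]
      ring
  simp only [hrow, Finset.sum_const, Finset.card_univ, nsmul_eq_mul]

/-- Estimation-error sum for the toy forest: with `X₁, …, Xₙ` and `(U_{ij})`
independent uniforms on `[0,1]`, `qᵢ = max 0 (1 − k|Xᵢ − x|)`,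
`B_{ij} = 1_{U_{ij} ≤ (a/n)qᵢ}` and `W̃ᵢ = (k/(aM)) Σⱼ B_{ij}`, one has
`E[Σᵢ W̃ᵢ²] = (k/a) ((1 − 1/M)(2a)/(3n) + 1/M)`; in particular this equals
`k/a` when `M = 1`, and the formula converges to `2k/(3n)` as `M → ∞`. -/
theorem toy_forest_estimation_error_sum
    (k a n M : ℕ) (hk : 2 ≤ k) (ha : 0 < a) (han : a ≤ n) (hM : 0 < M)
    (x : ℝ) (hx : x ∈ Set.Icc (1 / (k : ℝ)) (1 - 1 / (k : ℝ)))
    {Ω : Type*} [MeasurableSpace Ω] (μ : Measure Ω) [IsProbabilityMeasure μ]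
    (X : Fin n → Ω → ℝ) (U : Fin n → Fin M → Ω → ℝ)
    (hXm : ∀ i, Measurable (X i)) (hUm : ∀ i j, Measurable (U i j))
    (hindep : iIndepFun
      (Sum.elim X (fun p : Fin n × Fin M => U p.1 p.2)) μ)
    (hXunif : ∀ i, Measure.map (X i) μ = volume.restrict (Set.Icc (0 : ℝ) 1))
    (hUunif : ∀ i j, Measure.map (U i j) μ = volume.restrict (Set.Icc (0 : ℝ) 1))
    (q : Fin n → Ω → ℝ) (hq : q = fun i ω => max 0 (1 - k * |X i ω - x|))
    (B : Fin n → Fin M → Ω → ℝ)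
    (hB : B = fun i j ω => if U i j ω ≤ ((a : ℝ) / n) * q i ω then 1 else 0)
    (W : Fin n → Ω → ℝ)
    (hW : W = fun i ω => ((k : ℝ) / (a * M)) * ∑ j, B i j ω) :
    (∫ ω, ∑ i, W i ω ^ 2 ∂μ
        = ((k : ℝ) / a) * ((1 - 1 / (M : ℝ)) * (2 * a) / (3 * n) + 1 / (M : ℝ)))
      ∧ (M = 1 → ∫ ω, ∑ i, W i ω ^ 2 ∂μ = (k : ℝ) / a)
      ∧ Tendsto
          (fun M' : ℕ =>
            ((k : ℝ) / a) * ((1 - 1 / (M' : ℝ)) * (2 * a) / (3 * n) + 1 / (M' : ℝ)))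
          atTop (nhds (2 * k / (3 * n))) := by
  suffices hmain : ∫ ω, ∑ i, W i ω ^ 2 ∂μ
      = (k : ℝ) / a * ((1 - 1 / (M : ℝ)) * (2 * a) / (3 * n) + 1 / (M : ℝ)) by
    refine ⟨hmain, fun hM1 => by rw [hmain, hM1]; norm_num, ?_⟩
    have h0 : Tendsto (fun M' : ℕ => 1 / (M' : ℝ)) atTop (nhds 0) :=
      tendsto_one_div_atTop_nhds_zero_nat
    convert ((((tendsto_const_nhds (x := (1 : ℝ))).sub h0).mul_const (2 * a : ℝ)).div_const
      (3 * n : ℝ)).add h0 |>.const_mul ((k : ℝ) / a) using 2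
    field_simp
    ring
  subst hq hB hW
  have hk0 : (0 : ℝ) < k := by positivity
  have hn0 : (n : ℝ) ≠ 0 := Nat.cast_ne_zero.2 (ha.trans_le han).ne'
  have hc : (a : ℝ) / n ∈ Icc (0 : ℝ) 1 :=
    ⟨by positivity, div_le_one_of_le₀ (by exact_mod_cast han) (Nat.cast_nonneg n)⟩
  have hmom := integral_ite_le_mul_ite_le_of_iIndepFun hXm hUm hindep hXunif hUunif
    (g := fun s => (a : ℝ) / n * max 0 (1 - k * |s - x|)) (by fun_prop)
    (const_mul_tent_mem_Icc hc hk0.le x)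
  beta_reduce at hmom
  rw [integral_sum_sq_const_mul_sum _ _ fun i j j' =>
    integrable_ite_le_mul_ite_le (hUm i j) (hUm i j') (by fun_prop)]
  simp only [hmom, sum_sum_ite_eq, mul_pow, integral_const_mul, setIntegral_Icc_tent hk0 hx,
    setIntegral_Icc_tent_pow hk0 hx two_ne_zero, Finset.sum_const, Finset.card_univ,
    Fintype.card_fin, nsmul_eq_mul]
  field_simp
  ring
end

section
/- Let m : ℝ → ℝ be three times continuously differentiable and let x ∈ (0,1). For each integer k with 1/k ≤ x ≤ 1 − 1/k and each t ∈ [0,1], define ψ_k(x,t) := k ∫ m(u) du over the interval [(⌊kx+t⌋ − t)/k, (⌊kx+t⌋ + 1 − t)/k] (the cell containing x in the toy partition with offset t). Then lim_{k→∞} k² ( ∫_0^1 ψ_k(x,t) dt − m(x) ) = m″(x)/12. -/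
/-!
Write `r = fract (k x + t)`. The cell containing `x` is `[x - r/k, x + (1 - r)/k]`, and
`t ↦ fract (k x + t)` preserves Lebesgue measure on `[0, 1]`, so the infinite forest averages
these cell means over `r ∈ [0, 1]`. If `G'' = m`, that average is the symmetric second difference
`k² (G (x + 1/k) - 2 G x + G (x - 1/k))`, and the fourth-order Taylor expansion of `G` at `x`
turns it into `m x + m'' x / (12 k²) + o(k⁻²)`.
-/

open Filter Topology Asymptotics intervalIntegral

variable {E : Type*} [NormedAddCommGroup E] [NormedSpace ℝ E]

theorem exists_contDiff_succ_hasDerivAt [CompleteSpace E] {n : ℕ} {f : ℝ → E}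
    (hf : ContDiff ℝ n f) :
    ∃ F : ℝ → E, ContDiff ℝ (n + 1) F ∧ ∀ u, HasDerivAt F (f u) u := by
  have hF (u : ℝ) : HasDerivAt (fun v => ∫ t in 0..v, f t) (f u) u :=
    (hf.continuous.integral_hasStrictDerivAt 0 u).hasDerivAt
  refine ⟨_, contDiff_succ_iff_deriv.2 ⟨fun u => (hF u).differentiableAt, by simp, ?_⟩, hF⟩
  rwa [funext fun u => (hF u).deriv]

theorem integral_comp_fract_add (f : ℝ → E) (y : ℝ) :
    ∫ t in (0 : ℝ)..1, f (Int.fract (y + t)) = ∫ r in (0 : ℝ)..1, f r := by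
  have hper : Function.Periodic (fun u => f (Int.fract u)) 1 :=
    (Int.fract_periodic ℝ).comp f
  rw [integral_comp_add_left (fun u => f (Int.fract u)), add_zero,
    hper.intervalIntegral_add_eq y 0, zero_add, integral_of_le zero_le_one,
    integral_of_le zero_le_one, MeasureTheory.integral_Ioc_eq_integral_Ioo,
    MeasureTheory.integral_Ioc_eq_integral_Ioo]
  refine MeasureTheory.setIntegral_congr_fun measurableSet_Ioo fun r hr => ?_
  rw [Int.fract_eq_self.2 ⟨hr.1.le, hr.2⟩]

theorem integral_floor_cellMean_eq (f : ℝ → E) {k : ℝ} (hk : k ≠ 0) (x : ℝ) :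
    ∫ t in (0 : ℝ)..1,
        k • ∫ u in ((⌊k * x + t⌋ : ℝ) - t) / k..((⌊k * x + t⌋ : ℝ) + 1 - t) / k, f u
      = ∫ r in (0 : ℝ)..1, k • ∫ u in x - r / k..x + (1 - r) / k, f u := by
  rw [← integral_comp_fract_add (fun r => k • ∫ u in x - r / k..x + (1 - r) / k, f u) (k * x)]
  congr! 4 with t
  · rw [← Int.self_sub_fract]; field_simp; ring
  · rw [← Int.self_sub_fract]; field_simp; ring

theorem integral_cellMean_eq_symmSecondDiff [CompleteSpace E] {f F G : ℝ → E}
    (hf : Continuous f) (hF : ∀ u, HasDerivAt F (f u) u) (hG : ∀ u, HasDerivAt G (F u) u)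
    {k : ℝ} (hk : k ≠ 0) (x : ℝ) :
    ∫ r in (0 : ℝ)..1, k • ∫ u in x - r / k..x + (1 - r) / k, f u
      = k ^ 2 • (G (x + k⁻¹) - (2 : ℝ) • G x + G (x - k⁻¹)) := by
  have hFc : Continuous F := continuous_iff_continuousAt.2 fun u => (hF u).continuousAt
  have hcell (r : ℝ) : k • ∫ u in x - r / k..x + (1 - r) / k, f u
      = k • (F (x + (1 - r) / k) - F (x - r / k)) :=
    congrArg (k • ·) (integral_eq_sub_of_hasDerivAt (fun u _ => hF u) (hf.intervalIntegrable _ _))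
  have hprim (r : ℝ) : HasDerivAt (fun r => k ^ 2 • (G (x - r / k) - G (x + (1 - r) / k)))
      (k • (F (x + (1 - r) / k) - F (x - r / k))) r := by
    have h₁ := (hG (x - r / k)).scomp r (((hasDerivAt_id' r).div_const k).const_sub x)
    have h₂ := (hG (x + (1 - r) / k)).scomp r
      ((((hasDerivAt_id' r).const_sub 1).div_const k).const_add x)
    refine ((h₁.sub h₂).const_smul (k ^ 2)).congr_deriv ?_
    match_scalars <;> field_simp
  have hcont : Continuous fun r => k • (F (x + (1 - r) / k) - F (x - r / k)) :=
    continuous_const.smul ((hFc.comp (by fun_prop)).sub (hFc.comp (by fun_prop)))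
  simp_rw [hcell]
  rw [integral_eq_sub_of_hasDerivAt (fun r _ => hprim r) (hcont.intervalIntegrable _ _)]
  simp only [one_div, sub_self, zero_div, add_zero, sub_zero, smul_add]
  module

theorem isLittleO_symmSecondDiff {G : ℝ → E} (hG : ContDiff ℝ 4 G) (x : ℝ) :
    (fun h : ℝ => G (x + h) - (2 : ℝ) • G x + G (x - h) - h ^ 2 • iteratedDeriv 2 G x
        - (h ^ 4 / 12) • iteratedDeriv 4 G x) =o[𝓝 0] fun h => h ^ 4 := by
  set R := fun y => G y - taylorWithinEval G 4 Set.univ x y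
  have hR : R =o[𝓝 x] fun y => (y - x) ^ 4 := taylor_isLittleO_univ hG
  have hplus : (fun h => R (x + h)) =o[𝓝 0] fun h => h ^ 4 := by
    simpa [Function.comp_def] using
      hR.comp_tendsto (k := fun h => x + h) (by simpa using (continuous_const_add x).tendsto 0)
  have hminus : (fun h => R (x - h)) =o[𝓝 0] fun h => h ^ 4 := by
    simpa [Function.comp_def, (by decide : Even 4).neg_pow] using
      hR.comp_tendsto (k := fun h => x - h) (by simpa using (continuous_sub_left x).tendsto 0)
  -- the odd-order Taylor terms cancel in `R (x + h) + R (x - h)`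
  refine (hplus.add hminus).congr_left fun h => ?_
  simp only [R, taylor_within_apply, iteratedDerivWithin_univ, Finset.sum_range_succ, Finset.sum_range_zero, Nat.factorial, add_sub_cancel_left,
    sub_sub_cancel_left, iteratedDeriv_zero]
  push_cast
  module

theorem toy_infinite_forest_bias_general
    (m : ℝ → ℝ) (hm : ContDiff ℝ 3 m) (x : ℝ)
    (ψ : ℕ → ℝ → ℝ)
    (hψ : ψ = fun (k : ℕ) (t : ℝ) =>
      (k : ℝ) * ∫ u in (((⌊(k : ℝ) * x + t⌋ : ℝ) - t) / k)..
          (((⌊(k : ℝ) * x + t⌋ : ℝ) + 1 - t) / k), m u) :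
    Tendsto (fun k : ℕ => (k : ℝ) ^ 2 * ((∫ t in (0 : ℝ)..1, ψ k t) - m x))
      atTop (nhds (deriv (deriv m) x / 12)) := by
  obtain ⟨F, hFc, hF⟩ := exists_contDiff_succ_hasDerivAt hm
  obtain ⟨G, hGc, hG⟩ := exists_contDiff_succ_hasDerivAt hFc
  have hderiv : deriv (deriv G) = m := by
    simp [funext fun u => (hG u).deriv, funext fun u => (hF u).deriv]
  have hG2 : iteratedDeriv 2 G = m := by simp [iteratedDeriv_succ', hderiv]
  have hG4 : iteratedDeriv 4 G = deriv (deriv m) := by simp [iteratedDeriv_succ', hderiv]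
  have hmean (k : ℕ) (hk : (k : ℝ) ≠ 0) : ∫ t in (0 : ℝ)..1, ψ k t
      = k ^ 2 * (G (x + (k : ℝ)⁻¹) - 2 * G x + G (x - (k : ℝ)⁻¹)) := by
    subst hψ
    exact (integral_floor_cellMean_eq m hk x).trans
      (integral_cellMean_eq_symmSecondDiff hm.continuous hF hG hk x)
  have hrem := ((isLittleO_symmSecondDiff (hGc.of_le (by norm_num)) x).comp_tendsto
    (tendsto_inv_atTop_nhds_zero_nat (𝕜 := ℝ))).tendsto_div_nhds_zero
  rw [hG2, hG4] at hrem
  rw [← zero_add (deriv (deriv m) x / 12)]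
  refine (hrem.add_const _).congr' ?_
  filter_upwards [eventually_ne_atTop 0] with k hk
  simp only [Function.comp_apply, smul_eq_mul, hmean k (Nat.cast_ne_zero.2 hk)]
  field_simp
  ring

/-- Bias of the infinite toy forest: for `m` of class `C³` and `x ∈ (0,1)`, with
`ψ k t` the mean of `m` over the cell containing `x` in the toy partition of mesh
`1/k` with offset `t`, `k² (∫₀¹ ψ k t dt − m(x)) → m″(x)/12` as `k → ∞`. -/
theorem toy_infinite_forest_bias
    (m : ℝ → ℝ) (hm : ContDiff ℝ 3 m) (x : ℝ) (hx : x ∈ Set.Ioo (0 : ℝ) 1)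
    (ψ : ℕ → ℝ → ℝ)
    (hψ : ψ = fun (k : ℕ) (t : ℝ) =>
      (k : ℝ) * ∫ u in (((⌊(k : ℝ) * x + t⌋ : ℝ) - t) / k)..
          (((⌊(k : ℝ) * x + t⌋ : ℝ) + 1 - t) / k), m u) :
    Tendsto (fun k : ℕ => (k : ℝ) ^ 2 * ((∫ t in (0 : ℝ)..1, ψ k t) - m x))
      atTop (nhds (deriv (deriv m) x / 12)) :=
  toy_infinite_forest_bias_general m hm x ψ hψ
end
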